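/- arXiv:1906.09392 — 3 statements merged into one kernel-verified Lean document; each statement's English description precedes it below -/
import Mathlib

section
/- For every n ≥ 0 the following identities hold: PPL_t(4n) = PPL_t(n); PPL_t(4n+1) = PPL_t(n) + 1; PPL_t(4n+2) = min(PPL_t(n), PPL_t(n+1)) + 2; PPL_t(4n+3) = PPL_t(n+1) + 1. -/
/-- The Thue–Morse word: `tm n` is the number of ones (sum of binary digits)
in the binary expansion of `n`, taken mod 2. -/
def tm (n : ℕ) : ℕ := (Nat.digits 2 n).sum % 2

/-- `ps` is a factorization of the finite word `w` into nonempty palindromes. -/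
def IsPalDecomp (w : List ℕ) (ps : List (List ℕ)) : Prop :=
  ps.flatten = w ∧ ∀ p ∈ ps, p ≠ [] ∧ p.Palindrome

/-- The palindromic length of a finite word: the least number of nonempty
palindromes whose concatenation is the word (0 for the empty word). -/
noncomputable def palLen (w : List ℕ) : ℕ :=
  sInf {k | ∃ ps, ps.length = k ∧ IsPalDecomp w ps}

/-- `pplTM n` is the palindromic length of the prefix of length `n`
of the Thue–Morse word. -/
noncomputable def pplTM (n : ℕ) : ℕ := palLen ((List.range n).map tm)

/-!
Decomposing a prefix minimally and splitting off its last palindrome gives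
`P(N) = 1 + min {P(j) | j < N, t[j, N) is a palindrome}` for `N > 0`.
Since `φ²(x) = x x̄ x̄ x`, `t(x) = t(y) ↔ t(x / 4) = t(y / 4)` whenever `x % 4 + y % 4 = 3`;
hence the palindromic factors `t[a, b)` are the single letters, some factors of length three
starting at `a ≡ 2, 3 (mod 4)`, and those with `a + b ≡ 0 (mod 4)`, which are exactly the
symmetric trimmings of the images `φ²(t[⌊a / 4⌋, ⌈b / 4⌉))` of block palindromes. Feeding this
classification into the recursion for `P(4n + r)` and using the recurrences at smaller
arguments, the identities follow together by strong induction on `n`.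
-/

section PalLen

theorem palLen_le_length {w : List ℕ} {ps : List (List ℕ)} (h : IsPalDecomp w ps) :
    palLen w ≤ ps.length :=
  Nat.sInf_le ⟨ps, rfl, h⟩

theorem exists_isPalDecomp_length_eq_palLen (w : List ℕ) :
    ∃ ps, ps.length = palLen w ∧ IsPalDecomp w ps := by
  have hsingletons : IsPalDecomp w (w.map ([·])) :=
    ⟨by induction w <;> simp_all, by simp [List.Palindrome.singleton]⟩
  exact Nat.sInf_mem (s := {k | ∃ ps, ps.length = k ∧ IsPalDecomp w ps})
    ⟨_, _, rfl, hsingletons⟩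

theorem palLen_append_le {u p : List ℕ} (hp : p.Palindrome) :
    palLen (u ++ p) ≤ palLen u + 1 := by
  rcases eq_or_ne p [] with rfl | hne
  · simp
  obtain ⟨ps, hlen, hflat, hpal⟩ := exists_isPalDecomp_length_eq_palLen u
  have hdec : IsPalDecomp (u ++ p) (ps ++ [p]) := by
    refine ⟨by simp [hflat], fun q hq => ?_⟩
    rcases List.mem_append.mp hq with hq | hq
    · exact hpal q hq
    · rw [List.mem_singleton.mp hq]; exact ⟨hne, hp⟩
  simpa [hlen] using palLen_le_length hdec

theorem exists_palLen_eq_append_succ {w : List ℕ} (hw : w ≠ []) :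
    ∃ u p, u ++ p = w ∧ p ≠ [] ∧ p.Palindrome ∧ palLen w = palLen u + 1 := by
  obtain ⟨ps, hlen, hflat, hpal⟩ := exists_isPalDecomp_length_eq_palLen w
  rcases List.eq_nil_or_concat ps with rfl | ⟨ps', p, rfl⟩
  · exact absurd hflat.symm (by simpa using hw)
  have hp := hpal p (by simp)
  have hu : palLen ps'.flatten ≤ ps'.length :=
    palLen_le_length ⟨rfl, fun q hq => hpal q (by simp [hq])⟩
  have hw' : ps'.flatten ++ p = w := by simpa using hflat
  refine ⟨ps'.flatten, p, hw', hp.1, hp.2, le_antisymm (hw' ▸ palLen_append_le hp.2) ?_⟩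
  simp only [List.concat_eq_append, List.length_append, List.length_singleton] at hlen
  omega

end PalLen

section PalFactor

variable (w : ℕ → ℕ)

def IsPalFactor (a b : ℕ) : Prop :=
  ∀ i j, a ≤ i → i < b → i + j + 1 = a + b → w i = w j

variable {w}

theorem isPalFactor_succ (a : ℕ) : IsPalFactor w a (a + 1) := by
  intro i j hi hib hij
  obtain rfl : i = a := by omega
  obtain rfl : j = i := by omega
  rfl

theorem IsPalFactor.inner {a b a' b' : ℕ} (h : IsPalFactor w a b) (ha : a ≤ a')
    (hsum : a' + b' = a + b) : IsPalFactor w a' b' :=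
  fun i j hi hib hij => h i j (by omega) (by omega) (by omega)

theorem palindrome_map_range_iff_isPalFactor {a l : ℕ} :
    ((List.range l).map (fun i => w (a + i))).Palindrome ↔ IsPalFactor w a (a + l) := by
  rw [List.Palindrome.iff_reverse_eq]
  constructor
  · intro hrev i j hi hib hij
    have hidx : j - a < ((List.range l).map (fun i => w (a + i))).reverse.length := by simp; omega
    have := List.getElem_reverse hidx
    simp only [hrev, List.getElem_map, List.getElem_range, List.length_map,
      List.length_range] at this
    rw [show a + (j - a) = j by omega, show a + (l - 1 - (j - a)) = i by omega] at this
    exact this.symm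
  · intro h
    refine List.ext_getElem (by simp) fun k hk _ => ?_
    simp only [List.getElem_reverse, List.getElem_map, List.getElem_range, List.length_map,
      List.length_range]
    simp only [List.length_reverse, List.length_map, List.length_range] at hk
    exact h _ _ (by omega) (by omega) (by omega)

theorem palLen_map_range_le_succ {a b : ℕ} (hab : a ≤ b) (h : IsPalFactor w a b) :
    palLen ((List.range b).map w) ≤ palLen ((List.range a).map w) + 1 := by
  obtain ⟨l, rfl⟩ := Nat.exists_eq_add_of_le hab
  rw [List.range_add, List.map_append, List.map_map]
  exact palLen_append_le (palindrome_map_range_iff_isPalFactor.mpr h)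

theorem exists_palLen_map_range_eq_succ {b : ℕ} (hb : 0 < b) :
    ∃ a < b, IsPalFactor w a b ∧
      palLen ((List.range b).map w) = palLen ((List.range a).map w) + 1 := by
  obtain ⟨u, p, hup, hp, hpal, hlen⟩ :=
    exists_palLen_eq_append_succ (w := (List.range b).map w) (by simp; omega)
  have hb : b = u.length + p.length := by simpa using (congrArg List.length hup).symm
  rw [hb, List.range_add, List.map_append, List.map_map] at hup
  obtain ⟨hu, hp'⟩ := List.append_inj hup (by simp)
  rw [hp'] at hpal
  refine ⟨u.length, by simp [hb, List.length_pos_iff.mpr hp], ?_, ?_⟩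
  · simpa [hb] using palindrome_map_range_iff_isPalFactor.mp hpal
  · rwa [← hu]

end PalFactor

section ThueMorse

theorem tm_le_one (n : ℕ) : tm n ≤ 1 :=
  Nat.le_of_lt_succ (Nat.mod_lt _ two_pos)

theorem tm_eq_mod_two (n : ℕ) : tm n = (n % 2 + tm (n / 2)) % 2 := by
  rcases Nat.eq_zero_or_pos n with rfl | hn
  · rfl
  rw [tm, Nat.digits_def' one_lt_two hn, List.sum_cons, Nat.add_mod, tm]
  simp

-- `t(4q + r)` is `t(q)` for `r ∈ {0, 3}` and its complement for `r ∈ {1, 2}`.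
theorem tm_eq_mod_four (n : ℕ) : tm n = ((n % 4 + 1) / 2 + tm (n / 4)) % 2 := by
  rw [tm_eq_mod_two n, tm_eq_mod_two (n / 2), show n / 2 / 2 = n / 4 by omega]
  omega

theorem tm_eq_tm_iff_of_mod_four {x y : ℕ} (h : x % 4 + y % 4 = 3) :
    tm x = tm y ↔ tm (x / 4) = tm (y / 4) := by
  rw [tm_eq_mod_four x, tm_eq_mod_four y]
  have := tm_le_one (x / 4)
  have := tm_le_one (y / 4)
  omega

theorem IsPalFactor.four_mul {c d : ℕ} (h : IsPalFactor tm c d) :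
    IsPalFactor tm (4 * c) (4 * d) := by
  intro i j hi hid hij
  rw [tm_eq_tm_iff_of_mod_four (by omega)]
  exact h _ _ (by omega) (by omega) (by omega)

theorem IsPalFactor.div_four {a b : ℕ} (h : IsPalFactor tm a b) (hab : (a + b) % 4 = 0) :
    IsPalFactor tm (a / 4) ((b + 3) / 4) := by
  intro i j hi hib hij
  rcases eq_or_ne i j with rfl | hne
  · rfl
  set x := max a (4 * i)
  have hx := h x (a + b - 1 - x) (le_max_left _ _) (by omega) (by omega)
  rwa [tm_eq_tm_iff_of_mod_four (by omega), show x / 4 = i by omega,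
    show (a + b - 1 - x) / 4 = j by omega] at hx

theorem IsPalFactor.odd_of_length_two {n : ℕ} (h : IsPalFactor tm n (n + 2)) : n % 2 = 1 := by
  have hn := h n (n + 1) le_rfl (by omega) (by omega)
  by_contra
  rw [tm_eq_mod_two n, tm_eq_mod_two (n + 1), show (n + 1) / 2 = n / 2 by omega] at hn
  omega

theorem IsPalFactor.two_le_mod_four_of_length_three {n : ℕ} (h : IsPalFactor tm n (n + 3)) :
    2 ≤ n % 4 := by
  have hn := h n (n + 2) le_rfl (by omega) (by omega)
  by_contra
  rw [tm_eq_mod_four n, tm_eq_mod_four (n + 2), show (n + 2) / 4 = n / 4 by omega] at hn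
  omega

theorem not_isPalFactor_length_five (n : ℕ) : ¬ IsPalFactor tm n (n + 5) := by
  intro h
  have hmod := (h.inner (a' := n + 1) (b' := n + 4) (by omega) (by omega)
    ).two_le_mod_four_of_length_three
  have h1 := h (n + 1) (n + 3) (by omega) (by omega) (by omega)
  have h0 := h n (n + 4) le_rfl (by omega) (by omega)
  rw [tm_eq_mod_four, tm_eq_mod_four (n + 3), show (n + 1) / 4 = n / 4 by omega,
    show (n + 3) / 4 = n / 4 + 1 by omega] at h1
  rw [tm_eq_mod_four, tm_eq_mod_four (n + 4), show (n + 4) / 4 = n / 4 + 1 by omega] at h0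
  omega

theorem IsPalFactor.classify {a b : ℕ} (h : IsPalFactor tm a b) (hab : a < b) :
    b = a + 1 ∨ (b = a + 3 ∧ 2 ≤ a % 4) ∨ (a + b) % 4 = 0 := by
  obtain ⟨l, hl | hl⟩ := Nat.even_or_odd' (b - a)
  · have hcentre := h.inner (a' := a + l - 1) (b' := a + l - 1 + 2) (by omega) (by omega)
    have := hcentre.odd_of_length_two
    omega
  · rcases (by omega : l = 0 ∨ l = 1 ∨ 2 ≤ l) with rfl | rfl | hl2
    · omega
    · have := (h.inner (a' := a) (b' := a + 3) le_rfl (by omega)).two_le_mod_four_of_length_three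
      omega
    · exact absurd (h.inner (a' := a + l - 2) (b' := a + l - 2 + 5) (by omega) (by omega))
        (not_isPalFactor_length_five _)

end ThueMorse

section Recurrences

theorem pplTM_le_succ_of_isPalFactor {a b : ℕ} (hab : a ≤ b) (h : IsPalFactor tm a b) :
    pplTM b ≤ pplTM a + 1 :=
  palLen_map_range_le_succ hab h

theorem exists_isPalFactor_pplTM_eq_succ {b : ℕ} (hb : 0 < b) :
    ∃ a < b, IsPalFactor tm a b ∧ pplTM b = pplTM a + 1 :=
  exists_palLen_map_range_eq_succ hb

theorem pplTM_add_le (n k : ℕ) : pplTM (n + k) ≤ pplTM n + k := by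
  induction k with
  | zero => rfl
  | succ k ih =>
    have := pplTM_le_succ_of_isPalFactor (Nat.le_add_right _ 1) (isPalFactor_succ (n + k))
    rw [← add_assoc]
    omega

def PplTMRecurrence (n : ℕ) : Prop :=
  pplTM (4 * n) = pplTM n ∧ pplTM (4 * n + 1) = pplTM n + 1 ∧
    pplTM (4 * n + 2) = min (pplTM n) (pplTM (n + 1)) + 2 ∧
    pplTM (4 * n + 3) = pplTM (n + 1) + 1

variable {n : ℕ} (ih : ∀ m < n, PplTMRecurrence m)
include ih

theorem pplTM_four_mul : pplTM (4 * n) = pplTM n := by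
  rcases Nat.eq_zero_or_pos n with rfl | hn
  · rfl
  apply le_antisymm
  · obtain ⟨c, hcn, hpal, hc⟩ := exists_isPalFactor_pplTM_eq_succ hn
    calc pplTM (4 * n)
        ≤ pplTM (4 * c) + 1 := pplTM_le_succ_of_isPalFactor (by omega) hpal.four_mul
      _ = pplTM n := by rw [(ih c hcn).1, hc]
  · obtain ⟨j, hj, hpal, hP⟩ := exists_isPalFactor_pplTM_eq_succ (by omega : 0 < 4 * n)
    rcases hpal.classify hj with hj | ⟨hj, hmod⟩ | hmod
    · obtain ⟨m, rfl⟩ : ∃ m, n = m + 1 := ⟨n - 1, by omega⟩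
      obtain ⟨-, -, -, hm3⟩ := ih m (by omega)
      rw [show j = 4 * m + 3 by omega, hm3] at hP
      omega
    · omega
    · obtain ⟨c, rfl⟩ : ∃ c, j = 4 * c := ⟨j / 4, by omega⟩
      have hblock : IsPalFactor tm c n := by convert hpal.div_four hmod using 1 <;> omega
      have hn_le := pplTM_le_succ_of_isPalFactor (by omega) hblock
      rw [(ih c (by omega)).1] at hP
      omega

theorem pplTM_four_mul_add_one (h0 : pplTM (4 * n) = pplTM n) :
    pplTM (4 * n + 1) = pplTM n + 1 := by
  apply le_antisymm (h0 ▸ pplTM_add_le _ 1)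
  obtain ⟨j, hj, hpal, hP⟩ := exists_isPalFactor_pplTM_eq_succ (by omega : 0 < 4 * n + 1)
  rcases hpal.classify hj with hj | ⟨hj, hmod⟩ | hmod
  · rw [show j = 4 * n by omega, h0] at hP
    omega
  · obtain ⟨m, rfl⟩ : ∃ m, n = m + 1 := ⟨n - 1, by omega⟩
    obtain ⟨-, -, hm2, -⟩ := ih m (by omega)
    have hsucc := pplTM_add_le m 1
    rw [show j = 4 * m + 2 by omega, hm2] at hP
    omega
  · obtain ⟨c, rfl⟩ : ∃ c, j = 4 * c + 3 := ⟨j / 4, by omega⟩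
    have hblock : IsPalFactor tm c (n + 1) := by convert hpal.div_four hmod using 1 <;> omega
    have hn_le := pplTM_le_succ_of_isPalFactor (by omega)
      (hblock.inner (a' := c + 1) (b' := n) (by omega) (by omega))
    obtain ⟨-, -, -, hc3⟩ := ih c (by omega)
    rw [hc3] at hP
    omega

theorem pplTM_four_mul_add_two (h0 : pplTM (4 * n) = pplTM n)
    (h1 : pplTM (4 * n + 1) = pplTM n + 1) :
    pplTM (4 * n + 2) = min (pplTM n) (pplTM (n + 1)) + 2 := by
  apply le_antisymm
  · obtain ⟨c, hcn, hpal, hc⟩ := exists_isPalFactor_pplTM_eq_succ (by omega : 0 < n + 1)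
    have hc0 : pplTM (4 * c) = pplTM c := by
      rcases (Nat.lt_succ_iff.mp hcn).lt_or_eq with hcn | rfl
      exacts [(ih c hcn).1, h0]
    have hlast := pplTM_le_succ_of_isPalFactor (by omega)
      (hpal.four_mul.inner (a' := 4 * c + 2) (b' := 4 * n + 2) (by omega) (by omega))
    have hc2 := pplTM_add_le (4 * c) 2
    have hn2 := pplTM_add_le (4 * n) 2
    omega
  · obtain ⟨j, hj, hpal, hP⟩ := exists_isPalFactor_pplTM_eq_succ (by omega : 0 < 4 * n + 2)
    rcases hpal.classify hj with hj | ⟨hj, hmod⟩ | hmod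
    · rw [show j = 4 * n + 1 by omega, h1] at hP
      omega
    · obtain ⟨m, rfl⟩ : ∃ m, n = m + 1 := ⟨n - 1, by omega⟩
      obtain ⟨-, -, -, hm3⟩ := ih m (by omega)
      rw [show j = 4 * m + 3 by omega, hm3] at hP
      omega
    · obtain ⟨c, rfl⟩ : ∃ c, j = 4 * c + 2 := ⟨j / 4, by omega⟩
      have hblock : IsPalFactor tm c (n + 1) := by convert hpal.div_four hmod using 1 <;> omega
      have hsucc_le := pplTM_le_succ_of_isPalFactor (by omega) hblock
      have hn_le := pplTM_le_succ_of_isPalFactor (by omega)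
        (hblock.inner (a' := c + 1) (b' := n) (by omega) (by omega))
      obtain ⟨-, -, hc2, -⟩ := ih c (by omega)
      rw [hc2] at hP
      omega

theorem pplTM_four_mul_add_three (h1 : pplTM (4 * n + 1) = pplTM n + 1)
    (h2 : pplTM (4 * n + 2) = min (pplTM n) (pplTM (n + 1)) + 2) :
    pplTM (4 * n + 3) = pplTM (n + 1) + 1 := by
  have h1' : ∀ c ≤ n, pplTM (4 * c + 1) = pplTM c + 1 := fun c hc => by
    rcases hc.lt_or_eq with hc | rfl
    exacts [(ih c hc).2.1, h1]
  apply le_antisymm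
  · obtain ⟨c, hcn, hpal, hc⟩ := exists_isPalFactor_pplTM_eq_succ (by omega : 0 < n + 1)
    have hlast := pplTM_le_succ_of_isPalFactor (by omega)
      (hpal.four_mul.inner (a' := 4 * c + 1) (b' := 4 * n + 3) (by omega) (by omega))
    rw [h1' c (by omega)] at hlast
    omega
  · obtain ⟨j, hj, hpal, hP⟩ := exists_isPalFactor_pplTM_eq_succ (by omega : 0 < 4 * n + 3)
    rcases hpal.classify hj with hj | ⟨hj, hmod⟩ | hmod
    · have hsucc := pplTM_add_le n 1
      rw [show j = 4 * n + 2 by omega, h2] at hP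
      omega
    · omega
    · obtain ⟨c, rfl⟩ : ∃ c, j = 4 * c + 1 := ⟨j / 4, by omega⟩
      have hblock : IsPalFactor tm c (n + 1) := by convert hpal.div_four hmod using 1 <;> omega
      have hsucc_le := pplTM_le_succ_of_isPalFactor (by omega) hblock
      rw [h1' c (by omega)] at hP
      omega

end Recurrences

/-- Theorem 1 (recurrence relations for the prefix palindromic length of the
Thue–Morse word): for every `n ≥ 0`, `PPL_t(4n) = PPL_t(n)`,
`PPL_t(4n+1) = PPL_t(n) + 1`, `PPL_t(4n+2) = min(PPL_t(n), PPL_t(n+1)) + 2`,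
and `PPL_t(4n+3) = PPL_t(n+1) + 1`. -/
theorem pplTM_recurrences (n : ℕ) :
    pplTM (4 * n) = pplTM n ∧
    pplTM (4 * n + 1) = pplTM n + 1 ∧
    pplTM (4 * n + 2) = min (pplTM n) (pplTM (n + 1)) + 2 ∧
    pplTM (4 * n + 3) = pplTM (n + 1) + 1 := by
  induction n using Nat.strong_induction_on with
  | _ n ih =>
  have h0 := pplTM_four_mul ih
  have h1 := pplTM_four_mul_add_one ih h0
  have h2 := pplTM_four_mul_add_two ih h0 h1
  exact ⟨h0, h1, h2, pplTM_four_mul_add_three ih h1 h2⟩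
end

section
/- For every k ≥ 0, the prefix of the Thue-Morse word of length 4^k is a palindrome; consequently PPL_t(4^k) = 1 for all k ≥ 0. -/
/-!
In base `b`, subtracting `n < b ^ m` from `b ^ m - 1` replaces each of the `m` digits `d`
of `n` (padded with zeros) by `b - 1 - d`. For `b = 2` and `m = 2k` the binary digit sums of
`n` and `4 ^ k - 1 - n` therefore add up to the even number `2k`, so `tm (4 ^ k - 1 - n) = tm n`:
the prefix of length `4 ^ k` is a palindrome, and a nonempty palindrome has palindromic length 1.
-/

lemma Nat.digits_sum_add_mul {b : ℕ} (hb : 1 < b) {c : ℕ} (hc : c < b) (q : ℕ) :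
    (b.digits (c + b * q)).sum = c + (b.digits q).sum := by
  by_cases h : c = 0 ∧ q = 0
  · simp [h.1, h.2]
  · rw [Nat.digits_add b hb c q hc (not_and_or.1 h), List.sum_cons]

lemma Nat.digits_sum_pow_sub_one_sub_add {b : ℕ} (hb : 1 < b) (m : ℕ) {n : ℕ} (hn : n < b ^ m) :
    (b.digits (b ^ m - 1 - n)).sum + (b.digits n).sum = m * (b - 1) := by
  induction m generalizing n with
  | zero => simp_all
  | succ m ih =>
    obtain ⟨c, q, hc, rfl⟩ : ∃ c q, c < b ∧ n = c + b * q :=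
      ⟨n % b, n / b, Nat.mod_lt _ (by omega), (Nat.mod_add_div n b).symm⟩
    have hq : q < b ^ m := by
      rw [pow_succ'] at hn
      exact Nat.lt_of_mul_lt_mul_left (by omega : b * q < b * b ^ m)
    obtain ⟨r, hr⟩ := Nat.exists_eq_add_of_lt hq
    have hcompl : b ^ (m + 1) - 1 - (c + b * q) = (b - 1 - c) + b * (b ^ m - 1 - q) := by
      rw [pow_succ, hr, show q + r + 1 - 1 - q = r by omega]
      have : (q + r + 1) * b = b * q + b * r + b := by ring
      omega
    rw [hcompl, digits_sum_add_mul hb (by omega), digits_sum_add_mul hb hc,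
      add_add_add_comm, ih (by omega), add_one_mul]
    omega

lemma tm_four_pow_sub_one_sub {m n : ℕ} (hn : n < 4 ^ m) : tm (4 ^ m - 1 - n) = tm n := by
  rw [show 4 ^ m = 2 ^ (2 * m) by rw [pow_mul]; norm_num] at hn ⊢
  have := Nat.digits_sum_pow_sub_one_sub_add one_lt_two (2 * m) hn
  unfold tm
  omega

lemma List.palindrome_map_range {α : Type*} {f : ℕ → α} {N : ℕ}
    (h : ∀ i < N, f (N - 1 - i) = f i) : ((List.range N).map f).Palindrome := by
  refine .of_reverse_eq ?_
  rw [← List.map_reverse, List.range_eq_range', List.reverse_range', List.map_map,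
    ← List.range_eq_range']
  exact List.map_congr_left fun i hi => by simpa using h i (List.mem_range.1 hi)

lemma palLen_eq_one_of_palindrome {w : List ℕ} (hw : w ≠ []) (hp : w.Palindrome) :
    palLen w = 1 := by
  have hsingleton : 1 ∈ {k | ∃ ps, ps.length = k ∧ IsPalDecomp w ps} :=
    ⟨[w], rfl, by simp, by simpa using ⟨hw, hp⟩⟩
  refine le_antisymm (Nat.sInf_le hsingleton) (le_csInf ⟨1, hsingleton⟩ ?_)
  rintro _ ⟨ps, rfl, hflat, -⟩
  refine Nat.one_le_iff_ne_zero.2 fun hlen => hw ?_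
  rw [← hflat, List.length_eq_zero_iff.1 hlen, List.flatten_nil]

/-- Every prefix of the Thue–Morse word of length `4 ^ k` is a palindrome;
consequently `PPL_t(4 ^ k) = 1` for all `k ≥ 0`. -/
theorem pplTM_pow_four (k : ℕ) :
    ((List.range (4 ^ k)).map tm).Palindrome ∧ pplTM (4 ^ k) = 1 := by
  have hpal : ((List.range (4 ^ k)).map tm).Palindrome :=
    List.palindrome_map_range fun _ hi => tm_four_pow_sub_one_sub hi
  exact ⟨hpal, palLen_eq_one_of_palindrome (by simp) hpal⟩
end

section
/- Every palindromic factor of the Thue-Morse word of odd length has length 1 or 3; that is, if the factor of t of length ℓ starting at some position i is a palindrome and ℓ is odd, then ℓ ≤ 3. Equivalently, every palindromic factor of t of length greater than 3 has even length. -/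
/-- The factor of the Thue–Morse word of length `ℓ` starting at position `i`. -/
def tmFactor (i ℓ : ℕ) : List ℕ := (List.range ℓ).map (fun j => tm (i + j))

lemma tm_lt_two (n : ℕ) : tm n < 2 := Nat.mod_lt _ (by norm_num)

lemma tm_even (k : ℕ) : tm (2 * k) = tm k := by
  rcases Nat.eq_zero_or_pos k with rfl | hk
  · rfl
  · unfold tm
    rw [Nat.digits_def' (by norm_num : (1:ℕ) < 2) (by omega)]
    simp [Nat.mul_div_cancel_left, Nat.mul_mod_right]

lemma tm_odd (k : ℕ) : tm (2 * k + 1) = (tm k + 1) % 2 := by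
  unfold tm
  rw [Nat.digits_def' (by norm_num : (1:ℕ) < 2) (by omega)]
  have h1 : (2 * k + 1) % 2 = 1 := by omega
  have h2 : (2 * k + 1) / 2 = k := by omega
  rw [h1, h2]
  simp [Nat.add_mod, Nat.add_comm]

lemma no_three (m : ℕ) (h1 : tm m = tm (m + 1)) (h2 : tm (m + 1) = tm (m + 2)) : False := by
  rcases Nat.even_or_odd m with ⟨k, hk⟩ | ⟨k, hk⟩
  · subst hk
    have e1 : tm (k + k) = tm k := by rw [← two_mul, tm_even]
    have e2 : tm (k + k + 1) = (tm k + 1) % 2 := by rw [← two_mul, tm_odd]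
    have := tm_lt_two k
    omega
  · subst hk
    have e1 : tm (2 * k + 1 + 1) = tm (k + 1) := by
      have : 2 * k + 1 + 1 = 2 * (k + 1) := by ring
      rw [this, tm_even]
    have e2 : tm (2 * k + 1 + 2) = (tm (k + 1) + 1) % 2 := by
      have : 2 * k + 1 + 2 = 2 * (k + 1) + 1 := by ring
      rw [this, tm_odd]
    have := tm_lt_two (k + 1)
    omega

lemma no_five (i : ℕ) (h1 : tm i = tm (i + 4)) (h2 : tm (i + 1) = tm (i + 3)) : False := by
  rcases Nat.even_or_odd i with ⟨m, hm⟩ | ⟨m, hm⟩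
  · subst hm
    have e0 : tm (m + m) = tm m := by rw [← two_mul, tm_even]
    have e1 : tm (m + m + 1) = (tm m + 1) % 2 := by rw [← two_mul, tm_odd]
    have e3 : tm (m + m + 3) = (tm (m + 1) + 1) % 2 := by
      have : m + m + 3 = 2 * (m + 1) + 1 := by ring
      rw [this, tm_odd]
    have e4 : tm (m + m + 4) = tm (m + 2) := by
      have : m + m + 4 = 2 * (m + 2) := by ring
      rw [this, tm_even]
    have a := tm_lt_two m
    have b := tm_lt_two (m + 1)
    have c := tm_lt_two (m + 2)
    exact no_three m (by omega) (by omega)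
  · subst hm
    have e0 : tm (2 * m + 1) = (tm m + 1) % 2 := tm_odd m
    have e1 : tm (2 * m + 1 + 1) = tm (m + 1) := by
      have : 2 * m + 1 + 1 = 2 * (m + 1) := by ring
      rw [this, tm_even]
    have e3 : tm (2 * m + 1 + 3) = tm (m + 2) := by
      have : 2 * m + 1 + 3 = 2 * (m + 2) := by ring
      rw [this, tm_even]
    have e4 : tm (2 * m + 1 + 4) = (tm (m + 2) + 1) % 2 := by
      have : 2 * m + 1 + 4 = 2 * (m + 2) + 1 := by ring
      rw [this, tm_odd]
    have a := tm_lt_two m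
    have b := tm_lt_two (m + 1)
    have c := tm_lt_two (m + 2)
    exact no_three m (by omega) (by omega)

lemma pal_point (i ℓ : ℕ) (hpal : (tmFactor i ℓ).Palindrome) (j : ℕ) (hj : j < ℓ) :
    tm (i + j) = tm (i + (ℓ - 1 - j)) := by
  have hrev := hpal.reverse_eq
  have hr : j < (tmFactor i ℓ).reverse.length := by simpa [tmFactor] using hj
  have hx : j < (tmFactor i ℓ).length := by simpa [tmFactor] using hj
  have A : (tmFactor i ℓ).reverse[j]'hr = tm (i + (ℓ - 1 - j)) := by
    rw [List.getElem_reverse]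
    simp [tmFactor]
  have B : (tmFactor i ℓ).reverse[j]'hr = tm (i + j) := by
    rw [List.getElem_of_eq hrev hr]
    simp [tmFactor]
  rw [B] at A
  exact A

/-- Every palindromic factor of the Thue–Morse word of odd length has length
at most 3 (hence length 1 or 3). -/
theorem tm_odd_palindromic_factor_le_three (i ℓ : ℕ) (hodd : Odd ℓ)
    (hpal : (tmFactor i ℓ).Palindrome) : ℓ ≤ 3 := by
  by_contra h
  obtain ⟨d, hd⟩ : ∃ d, ℓ = 2 * d + 5 := by
    obtain ⟨k, hk⟩ := hodd; exact ⟨k - 2, by omega⟩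
  have p1 := pal_point i ℓ hpal d (by omega)
  have p2 := pal_point i ℓ hpal (d + 1) (by omega)
  have h1 : ℓ - 1 - d = d + 4 := by omega
  have h2 : ℓ - 1 - (d + 1) = d + 3 := by omega
  rw [h1] at p1
  rw [h2] at p2
  simp only [← Nat.add_assoc] at p1 p2
  exact no_five (i + d) p1 p2
end
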